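/- Let P ⊂ ℝ^d be finite. For every x ∈ ℝ^d, the minimum nearest-neighbor geodesic distance from x to P satisfies min_{p∈P} d_N(x,p) = 2·r_P(x)². Consequently, for every α ≥ 0, the sublevel sets satisfy {x ∈ ℝ^d : r_P(x) ≤ α} = {x ∈ ℝ^d : min_{p∈P} d_N(x,p) ≤ 2α²}. -/

import Mathlib

open scoped BigOperators
open MeasureTheory

noncomputable section

/-- Points of `ℝ^d`. -/
abbrev Pt (d : ℕ) : Type := EuclideanSpace ℝ (Fin d)

/-- The edge-squared metric on a point set `P ⊆ ℝ^d`: the infimum over finite chains of points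
of `P` from `a` to `b` of the sum of squared Euclidean lengths of the steps. -/
noncomputable def edgeSq {d : ℕ} (P : Set (Pt d)) (a b : Pt d) : ℝ :=
  sInf {c : ℝ | ∃ (k : ℕ) (p : Fin (k + 1) → Pt d), p 0 = a ∧ p (Fin.last k) = b ∧
    (∀ i, p i ∈ P) ∧ c = ∑ i : Fin k, ‖p i.succ - p i.castSucc‖ ^ 2}

/-- A path `γ : [0,1] → ℝ^d` is piecewise-C¹ if it is continuous on `[0,1]` and there is a
partition `0 = t₀ < t₁ < ⋯ < t_m = 1` such that `γ` is `C¹` on each subinterval. -/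
def PiecewiseC1 {d : ℕ} (γ : ℝ → Pt d) : Prop :=
  ContinuousOn γ (Set.Icc 0 1) ∧
  ∃ (m : ℕ) (t : Fin (m + 1) → ℝ), StrictMono t ∧ t 0 = 0 ∧ t (Fin.last m) = 1 ∧
    ∀ i : Fin m, ContDiffOn ℝ 1 γ (Set.Icc (t i.castSucc) (t i.succ))

/-- The nearest-neighbor length of a path: `ℓ(γ) = ∫₀¹ r_P(γ(t)) ‖γ'(t)‖ dt`, where
`r_P(z) = min_{x ∈ P} ‖x - z‖` is the distance to the nearest point of `P`. -/
noncomputable def nnLength {d : ℕ} (P : Set (Pt d)) (γ : ℝ → Pt d) : ℝ :=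
  ∫ t in (0:ℝ)..1, Metric.infDist (γ t) P * ‖deriv γ t‖

/-- The nearest-neighbor geodesic distance:
`d_N(a,b) = 4 ⬝ inf { ℓ(γ) | γ piecewise-C¹ path from a to b }`. -/
noncomputable def nnGeo {d : ℕ} (P : Set (Pt d)) (a b : Pt d) : ℝ :=
  4 * sInf {l : ℝ | ∃ γ : ℝ → Pt d, PiecewiseC1 γ ∧ γ 0 = a ∧ γ 1 = b ∧ l = nnLength P γ}

/-!
The distance `r_P` to `P` is `1`-Lipschitz, so along a path `γ` one has
`r_P(γ t) ≥ r_P(γ 0) - s(t)`, where `s` is the arclength. Substituting `u = s(t)` in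
`∫ r_P(γ t) ‖γ' t‖ dt` gives `ℓ(γ) ≥ (r_P(γ 0)² - r_P(γ 1)²) / 2`, hence `d_N(x, p) ≥ 2 r_P(x)²`
for every `p ∈ P`. Conversely, along the segment from `x` to `p ∈ P` one has
`r_P ≤ (1 - s) ‖x - p‖`, so `d_N(x, p) ≤ 2 ‖x - p‖²`, and points `p` almost nearest to `x`
give the reverse inequality.
-/

open Set

theorem sq_sub_sq_le_two_mul_integral_max_sub {c L y : ℝ} (hc : 0 ≤ c) (hL : 0 ≤ L)
    (hy : 0 ≤ y) (hcy : c - L ≤ y) :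
    c ^ 2 - y ^ 2 ≤ 2 * ∫ u in (0 : ℝ)..L, max (c - u) 0 := by
  set m := min L c
  have hcont : Continuous fun u : ℝ => max (c - u) 0 := by fun_prop
  have htrunc : ∫ u in (0 : ℝ)..m, max (c - u) 0 ≤ ∫ u in (0 : ℝ)..L, max (c - u) 0 :=
    intervalIntegral.integral_mono_interval le_rfl (le_min hL hc) (min_le_left L c)
      (Filter.Eventually.of_forall fun u => le_max_right _ _) (hcont.intervalIntegrable _ _)
  have hlin : ∫ u in (0 : ℝ)..m, max (c - u) 0 = c * m - m ^ 2 / 2 := by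
    rw [intervalIntegral.integral_congr (g := fun u => c - u)]
    · rw [intervalIntegral.integral_comp_sub_left (fun u => u)]
      simp only [integral_id]
      ring
    · intro u hu
      rw [uIcc_of_le (le_min hL hc)] at hu
      exact max_eq_left (by linarith [hu.2, min_le_right L c])
  have hgap : c - m ≤ y := by
    rcases le_total L c with h | h
    · simp [m, h, hcy]
    · simp [m, h, hy]
  nlinarith [min_le_right L c]

theorem sq_sub_sq_le_two_mul_integral_mul {φ g : ℝ → ℝ} {a b : ℝ} (hab : a ≤ b)
    (hφ : ContinuousOn φ (Icc a b)) (hg : ContinuousOn g (Icc a b))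
    (hφ0 : ∀ t ∈ Icc a b, 0 ≤ φ t) (hg0 : ∀ t ∈ Icc a b, 0 ≤ g t)
    (hdrop : ∀ t ∈ Icc a b, φ a - φ t ≤ ∫ u in a..t, g u) :
    φ a ^ 2 - φ b ^ 2 ≤ 2 * ∫ t in a..b, φ t * g t := by
  set s : ℝ → ℝ := fun t => ∫ u in a..t, g u
  have hs : ContinuousOn s (Icc a b) := by
    have hint : IntegrableOn g (uIcc a b) := by
      rw [uIcc_of_le hab]; exact hg.integrableOn_Icc
    simpa [uIcc_of_le hab] using intervalIntegral.continuousOn_primitive_interval hint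
  have hs' : ∀ x ∈ Ioo a b, HasDerivAt s (g x) x := fun x hx =>
    intervalIntegral.integral_hasDerivAt_right
      ((hg.mono (Icc_subset_Icc_right hx.2.le)).intervalIntegrable_of_Icc hx.1.le)
      (hg.mono Ioo_subset_Icc_self |>.stronglyMeasurableAtFilter isOpen_Ioo x hx)
      (hg.continuousAt (Icc_mem_nhds hx.1 hx.2))
  have hmono : ∫ t in a..b, max (φ a - s t) 0 * g t ≤ ∫ t in a..b, φ t * g t := by
    refine intervalIntegral.integral_mono_on hab ?_ ?_ fun t ht =>
      mul_le_mul_of_nonneg_right (max_le (by linarith [hdrop t ht]) (hφ0 t ht)) (hg0 t ht)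
    · have : ContinuousOn (fun t => max (φ a - s t) 0 * g t) (Icc a b) := by fun_prop
      exact this.intervalIntegrable_of_Icc hab
    · exact (hφ.mul hg).intervalIntegrable_of_Icc hab
  have hsubst : ∫ t in a..b, max (φ a - s t) 0 * g t = ∫ u in (0 : ℝ)..s b, max (φ a - u) 0 := by
    have := intervalIntegral.integral_comp_mul_deriv'' (f := s) (f' := g)
      (g := fun u => max (φ a - u) 0) (by rwa [uIcc_of_le hab])
      (by simpa [hab] using fun x hx => (hs' x hx).hasDerivWithinAt)
      (by rwa [uIcc_of_le hab]) (by fun_prop)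
    simpa [s] using this
  have hsb : 0 ≤ s b := intervalIntegral.integral_nonneg hab hg0
  have := sq_sub_sq_le_two_mul_integral_max_sub (hφ0 a (left_mem_Icc.2 hab)) hsb
    (hφ0 b (right_mem_Icc.2 hab)) (by linarith [hdrop b (right_mem_Icc.2 hab)])
  linarith

section Paths

variable {E : Type*} [NormedAddCommGroup E] [NormedSpace ℝ E] {γ : ℝ → E} {a b : ℝ}

theorem derivWithin_Icc_eqOn_deriv (γ : ℝ → E) (a b : ℝ) :
    EqOn (derivWithin γ (Icc a b)) (deriv γ) (Ioo a b) := fun _ ht =>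
  derivWithin_of_mem_nhds (Icc_mem_nhds ht.1 ht.2)

theorem ContDiffOn.intervalIntegrable_mul_norm_deriv {h : ℝ → ℝ}
    (hγ : ContDiffOn ℝ 1 γ (Icc a b)) (hab : a < b) (hh : ContinuousOn h (Icc a b)) :
    IntervalIntegrable (fun t => h t * ‖deriv γ t‖) volume a b := by
  refine ((hh.mul (hγ.continuousOn_derivWithin (uniqueDiffOn_Icc hab) le_rfl).norm
    ).intervalIntegrable_of_Icc hab.le).congr_uIoo fun t ht => ?_
  rw [uIoo_of_le hab.le] at ht
  simp only [Pi.mul_apply, derivWithin_Icc_eqOn_deriv γ a b ht]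

theorem LipschitzWith.sq_sub_sq_le_two_mul_integral_norm_deriv [CompleteSpace E] {f : E → ℝ}
    (hf : LipschitzWith 1 f) (hf0 : ∀ z, 0 ≤ f z) (hγ : ContDiffOn ℝ 1 γ (Icc a b))
    (hab : a < b) :
    f (γ a) ^ 2 - f (γ b) ^ 2 ≤ 2 * ∫ t in a..b, f (γ t) * ‖deriv γ t‖ := by
  set γ' := derivWithin γ (Icc a b)
  have hγ' : ContinuousOn γ' (Icc a b) :=
    hγ.continuousOn_derivWithin (uniqueDiffOn_Icc hab) le_rfl
  have hdrop : ∀ t ∈ Icc a b, f (γ a) - f (γ t) ≤ ∫ u in a..t, ‖γ' u‖ := by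
    intro t ht
    have hsub : Icc a t ⊆ Icc a b := Icc_subset_Icc_right ht.2
    have hFTC : ∫ u in a..t, γ' u = γ t - γ a :=
      intervalIntegral.integral_eq_sub_of_hasDerivAt_of_le ht.1 (hγ.continuousOn.mono hsub)
        (fun u hu => ((hγ.differentiableOn one_ne_zero u (hsub (Ioo_subset_Icc_self hu))
          ).hasDerivWithinAt.hasDerivAt (Icc_mem_nhds hu.1 (hu.2.trans_le ht.2))))
        ((hγ'.mono hsub).intervalIntegrable_of_Icc ht.1)
    calc f (γ a) - f (γ t) ≤ dist (γ t) (γ a) := by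
          have := hf.dist_le_mul (γ t) (γ a)
          rw [Real.dist_eq, NNReal.coe_one, one_mul] at this
          linarith [neg_abs_le (f (γ t) - f (γ a))]
      _ = ‖∫ u in a..t, γ' u‖ := by rw [hFTC, dist_eq_norm]
      _ ≤ ∫ u in a..t, ‖γ' u‖ := intervalIntegral.norm_integral_le_integral_norm ht.1
  have hint : ∫ t in a..b, f (γ t) * ‖deriv γ t‖ = ∫ t in a..b, f (γ t) * ‖γ' t‖ :=
    intervalIntegral.integral_congr_Ioo_of_le hab.le fun t ht => by
      simp only [γ', derivWithin_Icc_eqOn_deriv γ a b ht]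
  rw [hint]
  exact sq_sub_sq_le_two_mul_integral_mul hab.le (hf.continuous.comp_continuousOn hγ.continuousOn)
    hγ'.norm (fun _ _ => hf0 _) (fun _ _ => norm_nonneg _) hdrop

end Paths

section Partition

variable {h : ℝ → ℝ} {m : ℕ} {t : Fin (m + 1) → ℝ}

theorem IntervalIntegrable.trans_iterate_fin
    (hint : ∀ i : Fin m, IntervalIntegrable h volume (t i.castSucc) (t i.succ)) :
    IntervalIntegrable h volume (t 0) (t (Fin.last m)) := by
  induction m with
  | zero => exact IntervalIntegrable.refl
  | succ m ih =>
    rw [← Fin.succ_last]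
    exact (ih (t := fun i => t i.castSucc) fun i => hint i.castSucc).trans (hint (Fin.last m))

theorem sub_le_integral_of_fin_partition {F : ℝ → ℝ}
    (hint : ∀ i : Fin m, IntervalIntegrable h volume (t i.castSucc) (t i.succ))
    (hle : ∀ i : Fin m, F (t i.castSucc) - F (t i.succ) ≤ ∫ s in t i.castSucc..t i.succ, h s) :
    F (t 0) - F (t (Fin.last m)) ≤ ∫ s in t 0..t (Fin.last m), h s := by
  induction m with
  | zero => simp
  | succ m ih =>
    have hinit := ih (t := fun i => t i.castSucc) (fun i => hint i.castSucc) fun i => hle i.castSucc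
    have hI := IntervalIntegrable.trans_iterate_fin (t := fun i => t i.castSucc)
      fun i => hint i.castSucc
    simp only [Fin.castSucc_zero] at hinit hI
    rw [← Fin.succ_last, ← intervalIntegral.integral_add_adjacent_intervals hI (hint (Fin.last m))]
    linarith [hle (Fin.last m)]

end Partition

section NearestNeighborGeodesic

variable {d : ℕ} {P : Set (Pt d)} {x p : Pt d}

theorem PiecewiseC1.infDist_sq_sub_sq_le_two_mul_nnLength {γ : ℝ → Pt d} (hγ : PiecewiseC1 γ) :
    Metric.infDist (γ 0) P ^ 2 - Metric.infDist (γ 1) P ^ 2 ≤ 2 * nnLength P γ := by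
  obtain ⟨-, m, t, ht, ht0, ht1, hpieces⟩ := hγ
  have hlt : ∀ i : Fin m, t i.castSucc < t i.succ := fun i => ht Fin.castSucc_lt_succ
  have := sub_le_integral_of_fin_partition (F := fun s => Metric.infDist (γ s) P ^ 2 / 2)
    (h := fun s => Metric.infDist (γ s) P * ‖deriv γ s‖)
    (fun i => (hpieces i).intervalIntegrable_mul_norm_deriv (hlt i)
      ((Metric.continuous_infDist_pt P).comp_continuousOn (hpieces i).continuousOn))
    fun i => by
      linarith [Metric.lipschitz_infDist_pt P |>.sq_sub_sq_le_two_mul_integral_norm_deriv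
        (fun _ => Metric.infDist_nonneg) (hpieces i) (hlt i)]
  rw [ht0, ht1] at this
  rw [nnLength]
  linarith

theorem ContDiff.piecewiseC1 {γ : ℝ → Pt d} (hγ : ContDiff ℝ 1 γ) : PiecewiseC1 γ :=
  ⟨hγ.continuous.continuousOn, 1, fun i => i, fun _ _ h => by simpa using h, by simp, by simp,
    fun _ => hγ.contDiffOn⟩

theorem nnLength_lineMap_le (hp : p ∈ P) :
    nnLength P (AffineMap.lineMap x p) ≤ dist x p ^ 2 / 2 := by
  have hcont : Continuous fun s : ℝ => Metric.infDist (AffineMap.lineMap x p s) P :=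
    (Metric.continuous_infDist_pt P).comp (AffineMap.contDiff_lineMap x p (n := 0)).continuous
  calc nnLength P (AffineMap.lineMap x p)
      = ∫ s in (0 : ℝ)..1, Metric.infDist (AffineMap.lineMap x p s) P * dist x p := by
        simp only [nnLength, AffineMap.hasDerivAt_lineMap.deriv, dist_eq_norm']
    _ ≤ ∫ s in (0 : ℝ)..1, (1 - s) * dist x p * dist x p := by
        refine intervalIntegral.integral_mono_on zero_le_one
          ((hcont.mul continuous_const).intervalIntegrable _ _)
          ((by fun_prop : Continuous fun s : ℝ => (1 - s) * dist x p * dist x p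
            ).intervalIntegrable _ _)
          fun s hs => mul_le_mul_of_nonneg_right ?_ dist_nonneg
        calc Metric.infDist (AffineMap.lineMap x p s) P ≤ dist (AffineMap.lineMap x p s) p :=
              Metric.infDist_le_dist_of_mem hp
          _ = (1 - s) * dist x p := by
              rw [dist_lineMap_right, Real.norm_of_nonneg (sub_nonneg.2 hs.2)]
    _ = dist x p ^ 2 / 2 := by
        simp only [mul_assoc, intervalIntegral.integral_mul_const]
        rw [intervalIntegral.integral_comp_sub_left (fun u => u)]
        simp only [integral_id]
        ring

theorem lineMap_mem_nnLength_set (x p : Pt d) :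
    nnLength P (AffineMap.lineMap x p) ∈ {l : ℝ | ∃ γ : ℝ → Pt d,
      PiecewiseC1 γ ∧ γ 0 = x ∧ γ 1 = p ∧ l = nnLength P γ} :=
  ⟨_, (AffineMap.contDiff_lineMap x p).piecewiseC1, AffineMap.lineMap_apply_zero x p,
    AffineMap.lineMap_apply_one x p, rfl⟩

theorem two_mul_infDist_sq_le_nnGeo (hp : p ∈ P) : 2 * Metric.infDist x P ^ 2 ≤ nnGeo P x p := by
  have : Metric.infDist x P ^ 2 / 2 ≤ sInf {l : ℝ | ∃ γ : ℝ → Pt d,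
      PiecewiseC1 γ ∧ γ 0 = x ∧ γ 1 = p ∧ l = nnLength P γ} := by
    refine le_csInf ⟨_, lineMap_mem_nnLength_set x p⟩ ?_
    rintro _ ⟨γ, hγ, rfl, rfl, rfl⟩
    have := hγ.infDist_sq_sub_sq_le_two_mul_nnLength (P := P)
    rw [Metric.infDist_zero_of_mem hp] at this
    linarith
  rw [nnGeo]
  linarith

theorem nnGeo_le_two_mul_dist_sq (hp : p ∈ P) : nnGeo P x p ≤ 2 * dist x p ^ 2 := by
  have : sInf {l : ℝ | ∃ γ : ℝ → Pt d,
      PiecewiseC1 γ ∧ γ 0 = x ∧ γ 1 = p ∧ l = nnLength P γ} ≤ dist x p ^ 2 / 2 := by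
    refine (csInf_le ⟨0, ?_⟩ (lineMap_mem_nnLength_set x p)).trans (nnLength_lineMap_le hp)
    rintro _ ⟨γ, -, -, -, rfl⟩
    exact intervalIntegral.integral_nonneg zero_le_one fun t _ =>
      mul_nonneg Metric.infDist_nonneg (norm_nonneg _)
  rw [nnGeo]
  linarith

theorem sInf_nnGeo_eq (P : Set (Pt d)) (x : Pt d) :
    sInf {c : ℝ | ∃ p ∈ P, c = nnGeo P x p} = 2 * Metric.infDist x P ^ 2 := by
  rcases P.eq_empty_or_nonempty with rfl | hne
  · simp [Metric.infDist_empty]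
  refine le_antisymm (le_of_forall_gt fun c hc => ?_) ?_
  · obtain ⟨p, hp, hxp⟩ : ∃ p ∈ P, dist x p < √(c / 2) :=
      (Metric.infDist_lt_iff hne).1 (Real.lt_sqrt Metric.infDist_nonneg |>.2 (by linarith))
    have hxp' : dist x p ^ 2 < c / 2 := (Real.lt_sqrt dist_nonneg).1 hxp
    calc sInf {c : ℝ | ∃ p ∈ P, c = nnGeo P x p}
        ≤ nnGeo P x p := csInf_le ⟨2 * Metric.infDist x P ^ 2, by
          rintro _ ⟨q, hq, rfl⟩; exact two_mul_infDist_sq_le_nnGeo hq⟩ ⟨p, hp, rfl⟩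
      _ ≤ 2 * dist x p ^ 2 := nnGeo_le_two_mul_dist_sq hp
      _ < c := by linarith
  · obtain ⟨p, hp⟩ := hne
    refine le_csInf ⟨_, p, hp, rfl⟩ ?_
    rintro _ ⟨q, hq, rfl⟩
    exact two_mul_infDist_sq_le_nnGeo hq

end NearestNeighborGeodesic

theorem nnGeo_to_set_eq (d : ℕ) (P : Set (Pt d)) :
    (∀ x : Pt d, sInf {c : ℝ | ∃ p ∈ P, c = nnGeo P x p} = 2 * Metric.infDist x P ^ 2) ∧
    (∀ α : ℝ, 0 ≤ α →
      {x : Pt d | Metric.infDist x P ≤ α} =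
        {x : Pt d | sInf {c : ℝ | ∃ p ∈ P, c = nnGeo P x p} ≤ 2 * α ^ 2}) := by
  refine ⟨sInf_nnGeo_eq P, fun α hα => ?_⟩
  ext x
  rw [mem_ofPred_eq, mem_ofPred_eq, sInf_nnGeo_eq, mul_le_mul_iff_right₀ two_pos,
    pow_le_pow_iff_left₀ Metric.infDist_nonneg hα two_ne_zero]
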